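/- For the density g_a as above, the integral of g_a^3 over (-1/2,1/2) is strictly less than 2·((a/4)^3·(2/a) + b^3·(1/2 - 2/a)) where b = a/(4(a-3)), and hence the integral of g_a^3 is O(a^2) while (∫ g_a^2)^3 grows at least like a^3/8^3; in particular, the ratio (∫ g_a^3)/(∫ g_a^2)^3 tends to 0 as a → ∞. -/

import Mathlib

open MeasureTheory

/-- The piecewise design density `g_a`: even, equal to `a/4` on `(0,1/a)`,
linear on `(1/a,2/a)`, equal to `a/(4(a-3))` on `(2/a,1/2)`, and `0` beyond `1/2`. -/
noncomputable def gdens (a x : ℝ) : ℝ :=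
  if |x| < 1 / a then a / 4
  else if |x| < 2 / a then a / 4 + (|x| - 1 / a) * a * (a / (4 * (a - 3)) - a / 4)
  else if |x| ≤ 1 / 2 then a / (4 * (a - 3))
  else 0


/-!
On `(0, 1/2)` the density is `a/4` on a core of length `1/a`, a linear ramp from `a/4` down
to `b = a/(4(a-3))` on `(1/a, 2/a)`, and `b` on the tail, so by evenness `∫ g_a^n` is twice
the sum of three explicit pieces. The ramp falls strictly below `a/4` near `2/a`, which gives the strict bound;
as `b ≤ 1`, that bound is `O(a^2)`, while the core alone contributes `a/8` to `∫ g_a^2`, so the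
ratio is `O(1/a)`.
-/

open Set Filter intervalIntegral

theorem integral_symm_eq_two_mul_of_even {f : ℝ → ℝ} {c : ℝ} (hf : ∀ x, f (-x) = f x)
    (hneg : IntervalIntegrable f volume (-c) 0) (hpos : IntervalIntegrable f volume 0 c) :
    ∫ x in -c..c, f x = 2 * ∫ x in 0..c, f x := by
  rw [← integral_add_adjacent_intervals hneg hpos, two_mul]
  congr 1
  simpa [hf] using (integral_comp_neg (a := 0) (b := c) f).symm

noncomputable def gdensRamp (a x : ℝ) : ℝ :=
  a / 4 + (x - 1 / a) * a * (a / (4 * (a - 3)) - a / 4)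

section

variable {a x : ℝ}

theorem div_four_mul_sub_three_le_div_four (ha : 4 ≤ a) : a / (4 * (a - 3)) ≤ a / 4 := by
  rw [div_le_div_iff₀ (by linarith) (by norm_num)]
  nlinarith

theorem div_four_mul_sub_three_lt_div_four (ha : 4 < a) : a / (4 * (a - 3)) < a / 4 := by
  rw [div_lt_div_iff₀ (by linarith) (by norm_num)]
  nlinarith

theorem div_four_mul_sub_three_le_one (ha : 4 ≤ a) : a / (4 * (a - 3)) ≤ 1 := by
  rw [div_le_one (by linarith)]
  linarith

theorem two_div_le_half (ha : 4 ≤ a) : 2 / a ≤ 1 / 2 := by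
  rw [div_le_div_iff₀ (by linarith) two_pos]
  linarith

theorem gdensRamp_two_div (ha : a ≠ 0) : gdensRamp a (2 / a) = a / (4 * (a - 3)) := by
  unfold gdensRamp
  field_simp
  ring

theorem gdensRamp_mem_Icc (ha : 4 ≤ a) (hx : x ∈ Icc (1 / a) (2 / a)) :
    gdensRamp a x ∈ Icc (a / (4 * (a - 3))) (a / 4) := by
  have ha0 : 0 < a := by linarith
  have h₁ : 1 ≤ x * a := (div_le_iff₀ ha0).1 hx.1
  have h₂ : x * a ≤ 2 := (le_div_iff₀ ha0).1 hx.2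
  have hBA := div_four_mul_sub_three_le_div_four ha
  have ht : (x - 1 / a) * a = x * a - 1 := by field_simp
  rw [gdensRamp, ht]
  constructor <;> nlinarith

theorem continuous_gdensRamp (a : ℝ) : Continuous (gdensRamp a) := by
  unfold gdensRamp
  fun_prop

theorem gdens_neg (a x : ℝ) : gdens a (-x) = gdens a x := by
  simp only [gdens, abs_neg]

theorem measurable_gdens (a : ℝ) : Measurable (gdens a) := by
  refine Measurable.ite (measurableSet_lt measurable_abs measurable_const) measurable_const
    (Measurable.ite (measurableSet_lt measurable_abs measurable_const) (by fun_prop)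
      (Measurable.ite (measurableSet_le measurable_abs measurable_const) measurable_const
        measurable_const))

theorem gdens_of_abs_le (ha : 0 < a) (hx : |x| ≤ 1 / a) : gdens a x = a / 4 := by
  rcases hx.lt_or_eq with hx | hx
  · rw [gdens, if_pos hx]
  · have h2 : |x| < 2 / a := by rw [hx]; gcongr; norm_num
    rw [gdens, if_neg hx.ge.not_gt, if_pos h2, hx, sub_self, zero_mul, zero_mul, add_zero]

theorem gdens_of_mem_Icc (ha : 4 ≤ a) (hx : x ∈ Icc (1 / a) (2 / a)) :
    gdens a x = gdensRamp a x := by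
  have ha0 : 0 < a := by linarith
  have hx0 : |x| = x := abs_of_pos ((by positivity : (0 : ℝ) < 1 / a).trans_le hx.1)
  rcases hx.2.lt_or_eq with hx₂ | rfl
  · rw [gdens, hx0, if_neg hx.1.not_gt, if_pos hx₂, gdensRamp]
  · have h₁ : ¬ 2 / a < 1 / a := not_lt.2 (by gcongr; norm_num)
    rw [gdens, hx0, if_neg h₁, if_neg (lt_irrefl _), if_pos (two_div_le_half ha),
      gdensRamp_two_div ha0.ne']

theorem gdens_of_two_div_le_abs (ha : 0 < a) (hx₁ : 2 / a ≤ |x|) (hx₂ : |x| ≤ 1 / 2) :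
    gdens a x = a / (4 * (a - 3)) := by
  have h₁ : ¬ |x| < 1 / a := fun h => by
    have : 1 / a < 2 / a := by gcongr; norm_num
    linarith
  rw [gdens, if_neg h₁, if_neg hx₁.not_gt, if_pos hx₂]

theorem gdens_mem_Icc (ha : 4 ≤ a) (x : ℝ) : gdens a x ∈ Icc 0 (a / 4) := by
  have hB : 0 < a / (4 * (a - 3)) := div_pos (by linarith) (by linarith)
  have hBA := div_four_mul_sub_three_le_div_four ha
  unfold gdens
  split_ifs with h₁ h₂ h₃
  · exact ⟨by linarith, le_rfl⟩
  · have := gdensRamp_mem_Icc ha ⟨not_lt.1 h₁, h₂.le⟩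
    exact ⟨hB.le.trans this.1, this.2⟩
  · exact ⟨hB.le, hBA⟩
  · exact ⟨le_rfl, by linarith⟩

theorem intervalIntegrable_gdens_pow (ha : 4 ≤ a) (n : ℕ) (u v : ℝ) :
    IntervalIntegrable (fun x => gdens a x ^ n) volume u v := by
  have hbdd : ∀ s : Set ℝ, volume s ≠ ⊤ → IntegrableOn (fun x => gdens a x ^ n) s :=
    fun s hs =>
    Measure.integrableOn_of_bounded (M := (a / 4) ^ n) hs
      ((measurable_gdens a).pow_const n).aestronglyMeasurable <| ae_of_all _ fun x => by
      obtain ⟨h₀, h₁⟩ := gdens_mem_Icc ha x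
      rw [Real.norm_eq_abs, abs_pow, abs_of_nonneg h₀]
      exact pow_le_pow_left₀ h₀ h₁ n
  exact ⟨hbdd _ measure_Ioc_lt_top.ne, hbdd _ measure_Ioc_lt_top.ne⟩

theorem integral_gdensRamp_pow_nonneg (ha : 4 ≤ a) (n : ℕ) :
    0 ≤ ∫ x in 1 / a..2 / a, gdensRamp a x ^ n := by
  have hB : 0 < a / (4 * (a - 3)) := div_pos (by linarith) (by linarith)
  refine integral_nonneg (by gcongr; norm_num) fun x hx => ?_
  exact pow_nonneg (hB.le.trans (gdensRamp_mem_Icc ha hx).1) n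

theorem integral_gdensRamp_pow_lt (ha : 4 < a) {n : ℕ} (hn : n ≠ 0) :
    ∫ x in 1 / a..2 / a, gdensRamp a x ^ n < (a / 4) ^ n / a := by
  have ha0 : 0 < a := by linarith
  have hlt : 1 / a < 2 / a := by gcongr; norm_num
  have hB : 0 < a / (4 * (a - 3)) := div_pos ha0 (by linarith)
  have hle : ∀ x ∈ Ioc (1 / a) (2 / a), gdensRamp a x ^ n ≤ (a / 4) ^ n := fun x hx => by
    obtain ⟨h₀, h₁⟩ := gdensRamp_mem_Icc ha.le (Ioc_subset_Icc_self hx)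
    exact pow_le_pow_left₀ (hB.le.trans h₀) h₁ n
  have hend : gdensRamp a (2 / a) ^ n < (a / 4) ^ n := by
    rw [gdensRamp_two_div ha0.ne']
    exact pow_lt_pow_left₀ (div_four_mul_sub_three_lt_div_four ha) hB.le hn
  calc ∫ x in 1 / a..2 / a, gdensRamp a x ^ n < ∫ _ in 1 / a..2 / a, (a / 4) ^ n :=
        integral_lt_integral_of_continuousOn_of_le_of_exists_lt hlt
          ((continuous_gdensRamp a).pow n).continuousOn continuousOn_const hle
          ⟨2 / a, right_mem_Icc.2 hlt.le, hend⟩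
    _ = (a / 4) ^ n / a := by
      rw [intervalIntegral.integral_const, smul_eq_mul]
      field_simp
      ring

theorem integral_gdens_pow (ha : 4 ≤ a) (n : ℕ) :
    ∫ x in Ioo (-(1 / 2) : ℝ) (1 / 2), gdens a x ^ n =
      2 * ((a / 4) ^ n / a + (∫ x in 1 / a..2 / a, gdensRamp a x ^ n)
        + (a / (4 * (a - 3))) ^ n * (1 / 2 - 2 / a)) := by
  have ha0 : 0 < a := by linarith
  have h₀₁ : 0 ≤ 1 / a := by positivity
  have h₁₂ : 1 / a ≤ 2 / a := by gcongr; norm_num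
  have h₂₃ := two_div_le_half ha
  have hI := intervalIntegrable_gdens_pow ha n
  have hcore : ∫ x in (0 : ℝ)..1 / a, gdens a x ^ n = (a / 4) ^ n / a := by
    rw [integral_congr (g := fun _ => (a / 4) ^ n) fun x hx => ?_,
      intervalIntegral.integral_const, smul_eq_mul]
    · ring
    · rw [uIcc_of_le h₀₁] at hx
      rw [gdens_of_abs_le ha0 (by rw [abs_of_nonneg hx.1]; exact hx.2)]
  have hramp : ∫ x in 1 / a..2 / a, gdens a x ^ n = ∫ x in 1 / a..2 / a, gdensRamp a x ^ n :=
    integral_congr fun x hx => by rw [uIcc_of_le h₁₂] at hx; rw [gdens_of_mem_Icc ha hx]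
  have htail : ∫ x in 2 / a..1 / 2, gdens a x ^ n =
      (a / (4 * (a - 3))) ^ n * (1 / 2 - 2 / a) := by
    rw [integral_congr (g := fun _ => (a / (4 * (a - 3))) ^ n) fun x hx => ?_,
      intervalIntegral.integral_const, smul_eq_mul, mul_comm]
    rw [uIcc_of_le h₂₃] at hx
    have hx0 : |x| = x := abs_of_nonneg ((by positivity : (0 : ℝ) ≤ 2 / a).trans hx.1)
    rw [gdens_of_two_div_le_abs ha0 (hx0.symm ▸ hx.1) (hx0.symm ▸ hx.2)]
  rw [← integral_Ioc_eq_integral_Ioo, ← intervalIntegral.integral_of_le (by norm_num),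
    integral_symm_eq_two_mul_of_even (fun x => by rw [gdens_neg]) (hI _ _) (hI _ _),
    ← integral_add_adjacent_intervals (hI 0 (1 / a)) (hI (1 / a) (1 / 2)),
    ← integral_add_adjacent_intervals (hI (1 / a) (2 / a)) (hI (2 / a) (1 / 2)),
    hcore, hramp, htail, ← add_assoc]

theorem integral_gdens_pow_nonneg (ha : 4 ≤ a) (n : ℕ) :
    0 ≤ ∫ x in Ioo (-(1 / 2) : ℝ) (1 / 2), gdens a x ^ n :=
  integral_nonneg fun x => pow_nonneg (gdens_mem_Icc ha x).1 n

theorem integral_gdens_cube_lt (ha : 4 < a) :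
    ∫ x in Ioo (-(1 / 2) : ℝ) (1 / 2), gdens a x ^ 3 <
      2 * ((a / 4) ^ 3 * (2 / a) + (a / (4 * (a - 3))) ^ 3 * (1 / 2 - 2 / a)) := by
  have hramp := integral_gdensRamp_pow_lt ha three_ne_zero
  have hcore : (a / 4) ^ 3 * (2 / a) = 2 * ((a / 4) ^ 3 / a) := by ring
  rw [integral_gdens_pow ha.le]
  linarith

theorem integral_gdens_cube_le_sq (ha : 4 < a) :
    ∫ x in Ioo (-(1 / 2) : ℝ) (1 / 2), gdens a x ^ 3 ≤ a ^ 2 := by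
  have ha0 : 0 < a := by linarith
  have hB₀ : 0 ≤ a / (4 * (a - 3)) := (div_pos ha0 (by linarith)).le
  have hB₃ : (a / (4 * (a - 3))) ^ 3 ≤ 1 :=
    pow_le_one₀ hB₀ (div_four_mul_sub_three_le_one ha.le)
  have hcore : (a / 4) ^ 3 * (2 / a) = a ^ 2 / 32 := by field_simp; ring
  have htail : (a / (4 * (a - 3))) ^ 3 * (1 / 2 - 2 / a) ≤ 1 / 2 := by
    nlinarith [mul_nonneg (pow_nonneg hB₀ 3) (by positivity : (0 : ℝ) ≤ 2 / a)]
  have := integral_gdens_cube_lt ha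
  rw [hcore] at this
  nlinarith

theorem div_eight_le_integral_gdens_sq (ha : 4 ≤ a) :
    a / 8 ≤ ∫ x in Ioo (-(1 / 2) : ℝ) (1 / 2), gdens a x ^ 2 := by
  have hcore : (a / 4) ^ 2 / a = a / 16 := by field_simp; ring
  have hramp := integral_gdensRamp_pow_nonneg ha 2
  have htail := mul_nonneg (sq_nonneg (a / (4 * (a - 3)))) (sub_nonneg.2 (two_div_le_half ha))
  rw [integral_gdens_pow ha, hcore]
  linarith

theorem integral_gdens_cube_div_sq_cube_le (ha : 4 < a) :
    (∫ x in Ioo (-(1 / 2) : ℝ) (1 / 2), gdens a x ^ 3) /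
      (∫ x in Ioo (-(1 / 2) : ℝ) (1 / 2), gdens a x ^ 2) ^ 3 ≤ 512 / a := by
  have ha0 : 0 < a := by linarith
  calc _ ≤ a ^ 2 / (a / 8) ^ 3 :=
        div_le_div₀ (sq_nonneg a) (integral_gdens_cube_le_sq ha) (by positivity)
          (pow_le_pow_left₀ (by positivity) (div_eight_le_integral_gdens_sq ha.le) 3)
    _ = 512 / a := by field_simp; ring

end

theorem gdens_cube_integral_lt_and_ratio_tendsto_zero :
    (∀ a : ℝ, 4 < a →
      ∫ x in Set.Ioo (-(1/2) : ℝ) (1/2), (gdens a x) ^ 3 <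
        2 * ((a / 4) ^ 3 * (2 / a) + (a / (4 * (a - 3))) ^ 3 * (1 / 2 - 2 / a))) ∧
    (∃ C > 0, ∀ᶠ a in Filter.atTop,
      ∫ x in Set.Ioo (-(1/2) : ℝ) (1/2), (gdens a x) ^ 3 ≤ C * a ^ 2) ∧
    (∀ᶠ a in Filter.atTop,
      a ^ 3 / 8 ^ 3 ≤ (∫ x in Set.Ioo (-(1/2) : ℝ) (1/2), (gdens a x) ^ 2) ^ 3) ∧
    Filter.Tendsto
      (fun a : ℝ =>
        (∫ x in Set.Ioo (-(1/2) : ℝ) (1/2), (gdens a x) ^ 3) /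
          (∫ x in Set.Ioo (-(1/2) : ℝ) (1/2), (gdens a x) ^ 2) ^ 3)
      Filter.atTop (nhds 0) := by
  refine ⟨fun a ha => integral_gdens_cube_lt ha, ⟨1, one_pos, ?_⟩, ?_, ?_⟩
  · filter_upwards [eventually_gt_atTop 4] with a ha
    simpa using integral_gdens_cube_le_sq ha
  · filter_upwards [eventually_ge_atTop 4] with a ha
    calc a ^ 3 / 8 ^ 3 = (a / 8) ^ 3 := by ring
      _ ≤ _ := pow_le_pow_left₀ (by linarith) (div_eight_le_integral_gdens_sq ha) 3
  · refine squeeze_zero' ?_ ?_ (tendsto_const_nhds.div_atTop tendsto_id (a := (512 : ℝ)))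
    · filter_upwards [eventually_ge_atTop 4] with a ha
      exact div_nonneg (integral_gdens_pow_nonneg ha 3)
        (pow_nonneg (integral_gdens_pow_nonneg ha 2) 3)
    · filter_upwards [eventually_gt_atTop 4] with a ha
      exact integral_gdens_cube_div_sq_cube_le ha
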